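/- arXiv:2008.06394 — 3 statements merged into one kernel-verified Lean document; each statement's English description precedes it below -/
import Mathlib

section
/- Let P be a Markov (probability) kernel on ℝⁿ that is strong Feller, i.e. for every bounded Borel measurable f : ℝⁿ → ℝ the map x ↦ ∫ f d(P x) is continuous, and irreducible, i.e. for every x ∈ ℝⁿ and every nonempty open ball B ⊆ ℝⁿ one has (P x)(B) > 0. Then P possesses at most one invariant probability measure: if μ₁ and μ₂ are probability measures on ℝⁿ with μ₁.bind P = μ₁ and μ₂.bind P = μ₂, then μ₁ = μ₂. -/
/-!
Let `ν = μ₁ + μ₂` and `h = dμ₁/dν`. Invariance of both `ν` and `μ₁ = h • ν` makes the superlevel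
set `S = {h > 1/2}` almost invariant: `P x S` is the indicator of `S` at `ν`-a.e. `x`. By the
strong Feller property `x ↦ P x S` is continuous, and by irreducibility `ν` charges every nonempty
open set, so this function takes only the values `0` and `1`, and is constant on the connected
space `ℝⁿ`. Hence `h ≤ 1/2` a.e. or `h > 1/2` a.e.; since `∫ h dν = 1 = ∫ 1/2 dν`, the latter is
impossible and the former forces `h = 1/2` a.e., i.e. `μ₁ = μ₂`.
-/

open MeasureTheory ProbabilityTheory Set

open scoped ENNReal

lemma ENNReal.exists_add_inv_lt {a b : ℝ≥0∞} (hab : a < b) :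
    ∃ n : ℕ, a + ((n : ℝ≥0∞) + 1)⁻¹ < b := by
  obtain ⟨n, hn⟩ := ENNReal.exists_inv_nat_lt (tsub_pos_iff_lt.2 hab).ne'
  refine ⟨n, ?_⟩
  calc a + ((n : ℝ≥0∞) + 1)⁻¹ ≤ a + (n : ℝ≥0∞)⁻¹ := by gcongr; exact le_self_add
    _ < b := lt_tsub_iff_left.1 hn

namespace MeasureTheory

variable {α : Type*} {mα : MeasurableSpace α}

lemma setLIntegral_superlevelSet_eq (μ : Measure α) {h : α → ℝ≥0∞} (hh : Measurable h)
    (c : ℝ≥0∞) :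
    ∫⁻ x in {x | c < h x}, h x ∂μ = c * μ {x | c < h x} + ∫⁻ x, (h x - c) ∂μ := by
  have hB : MeasurableSet {x | c < h x} := measurableSet_lt measurable_const hh
  have hsupp : Function.support (fun x => h x - c) ⊆ {x | c < h x} := fun x hx =>
    tsub_pos_iff_lt.1 (pos_iff_ne_zero.2 hx)
  rw [← setLIntegral_eq_of_support_subset hsupp, ← setLIntegral_const,
    ← lintegral_add_left measurable_const]
  exact setLIntegral_congr_fun hB fun x hx => (add_tsub_cancel_of_le (le_of_lt hx)).symm

lemma ae_notMem_or_ae_mem_of_continuous_ae_eq_indicator [TopologicalSpace α]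
    [PreconnectedSpace α] {ν : Measure α} [ν.IsOpenPosMeasure] {G : α → ℝ≥0∞}
    (hG : Continuous G) {s : Set α} (hGs : G =ᵐ[ν] s.indicator 1) :
    (∀ᵐ x ∂ν, x ∉ s) ∨ ∀ᵐ x ∂ν, x ∈ s := by
  -- A closed set of full measure is everything, so `G` takes only the values `0` and `1`.
  have hG01 : ∀ x, G x = 0 ∨ G x = 1 := by
    have hclosed : IsClosed (G ⁻¹' {0, 1}) := (toFinite _).isClosed.preimage hG
    suffices G ⁻¹' {0, 1} = univ by simpa [eq_univ_iff_forall] using this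
    rw [← compl_empty_iff, ← hclosed.isOpen_compl.measure_eq_zero_iff ν, ← mem_ae_iff]
    filter_upwards [hGs] with x hx
    by_cases hxs : x ∈ s <;> simp [hx, hxs]
  have hclopen : IsClopen (G ⁻¹' {1}) := by
    refine ⟨isClosed_singleton.preimage hG, ?_⟩
    have : G ⁻¹' {1} = (G ⁻¹' {0})ᶜ := by
      ext x
      rcases hG01 x with hx | hx <;> simp [hx]
    rw [this]
    exact (isClosed_singleton.preimage hG).isOpen_compl
  rcases isClopen_iff.1 hclopen with hempty | huniv
  · left
    filter_upwards [hGs] with x hx hxs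
    have : x ∈ G ⁻¹' {1} := by simp [hx, hxs]
    simp [hempty] at this
  · right
    filter_upwards [hGs] with x hx
    by_contra hxs
    have : x ∈ G ⁻¹' {1} := huniv ▸ mem_univ x
    simp [hx, hxs] at this

lemma continuous_measure_apply_of_continuous_integral_indicator {X : Type*} [TopologicalSpace X]
    {P : X → Measure α} [∀ x, IsFiniteMeasure (P x)] {s : Set α} (hs : MeasurableSet s)
    (hP : Continuous fun x => ∫ y, s.indicator (1 : α → ℝ) y ∂(P x)) :
    Continuous fun x => P x s := by
  simp only [integral_indicator_one hs] at hP
  convert ENNReal.continuous_ofReal.comp hP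
  simp [ofReal_measureReal]

end MeasureTheory

namespace ProbabilityTheory.Kernel

variable {α : Type*} {mα : MeasurableSpace α} {κ : Kernel α α} {μ ν : Measure α}

lemma Invariant.measure_eq_lintegral (hν : κ.Invariant ν) {s : Set α} (hs : MeasurableSet s) :
    ν s = ∫⁻ x, κ x s ∂ν := by
  conv_lhs => rw [← hν.def]
  exact Measure.bind_apply hs κ.aemeasurable

lemma Invariant.add (hμ : κ.Invariant μ) (hν : κ.Invariant ν) : κ.Invariant (μ + ν) := by
  rw [Invariant, Measure.comp_add, hμ.def, hν.def]

lemma Invariant.isOpenPosMeasure [TopologicalSpace α] [OpensMeasurableSpace α]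
    (hν : κ.Invariant ν) (hν₀ : ν ≠ 0)
    (hκ : ∀ x (U : Set α), IsOpen U → U.Nonempty → 0 < κ x U) : ν.IsOpenPosMeasure where
  open_pos U hU hne := by
    have : (ae ν).NeBot := ae_neBot.2 hν₀
    rw [hν.measure_eq_lintegral hU.measurableSet, Ne,
      lintegral_eq_zero_iff (κ.measurable_coe hU.measurableSet)]
    intro hzero
    obtain ⟨x, hx⟩ := hzero.exists
    exact (hκ x U hU hne).ne' hx

section Superlevel

variable {h : α → ℝ≥0∞}

lemma Invariant.setLIntegral_eq_lintegral_mul (hh : Measurable h)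
    (hνh : κ.Invariant (ν.withDensity h)) {s : Set α} (hs : MeasurableSet s) :
    ∫⁻ x in s, h x ∂ν = ∫⁻ x, h x * κ x s ∂ν := by
  rw [← withDensity_apply _ hs, hνh.measure_eq_lintegral hs,
    lintegral_withDensity_eq_lintegral_mul _ hh (κ.measurable_coe hs)]
  rfl

lemma Invariant.lintegral_tsub_add_lintegral_tsub_mul [IsFiniteMeasure ν]
    (hν : κ.Invariant ν) (hνh : κ.Invariant (ν.withDensity h)) (hh : Measurable h)
    {c : ℝ≥0∞} (hc : c ≠ ∞) :
    ∫⁻ x, (h x - c) ∂ν + ∫⁻ x, (c - h x) * κ x {y | c < h y} ∂ν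
      = ∫⁻ x, (h x - c) * κ x {y | c < h y} ∂ν := by
  set B := {y | c < h y}
  have hB : MeasurableSet B := measurableSet_lt measurable_const hh
  have hg : Measurable fun x => κ x B := κ.measurable_coe hB
  have hsplit : ∀ x, h x * κ x B + (c - h x) * κ x B = c * κ x B + (h x - c) * κ x B := by
    intro x
    rw [← add_mul, ← add_mul, add_tsub_eq_max, add_tsub_eq_max, max_comm]
  have hint := lintegral_congr (μ := ν) hsplit
  rw [lintegral_add_left (f := fun x => h x * κ x B) (hh.mul hg),
    lintegral_add_left (f := fun x => c * κ x B) (measurable_const.mul hg),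
    ← hνh.setLIntegral_eq_lintegral_mul hh hB, setLIntegral_superlevelSet_eq ν hh c,
    lintegral_const_mul _ hg, ← hν.measure_eq_lintegral hB, add_assoc] at hint
  exact (ENNReal.add_right_inj (ENNReal.mul_ne_top hc (measure_ne_top ν B))).1 hint

lemma Invariant.ae_kernel_superlevelSet [IsMarkovKernel κ] [IsFiniteMeasure ν]
    (hν : κ.Invariant ν) (hνh : κ.Invariant (ν.withDensity h)) (hh : Measurable h)
    (hfin : ∫⁻ x, h x ∂ν ≠ ∞) {c : ℝ≥0∞} (hc : c ≠ ∞) :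
    (∀ᵐ x ∂ν, c < h x → κ x {y | c < h y} = 1) ∧
      (∀ᵐ x ∂ν, h x < c → κ x {y | c < h y} = 0) := by
  set B := {y | c < h y}
  have hg : Measurable fun x => κ x B := κ.measurable_coe (measurableSet_lt measurable_const hh)
  have key := hν.lintegral_tsub_add_lintegral_tsub_mul hνh hh hc
  have hA : ∫⁻ x, (h x - c) ∂ν ≠ ∞ :=
    ne_top_of_le_ne_top hfin (lintegral_mono fun x => tsub_le_self)
  have hle : ∫⁻ x, (h x - c) * κ x B ∂ν ≤ ∫⁻ x, (h x - c) ∂ν :=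
    lintegral_mono fun x => mul_le_of_le_one_right' prob_le_one
  -- As `(h - c) * κ B ≤ h - c`, the identity `key` forces `(c - h) * κ B = 0` and
  -- `(h - c) * κ B = h - c` almost everywhere.
  have hlow : ∫⁻ x, (c - h x) * κ x B ∂ν = 0 := by
    have := key.le.trans hle
    rwa [(ENNReal.cancel_of_ne hA).add_le_iff_nonpos_right, nonpos_iff_eq_zero] at this
  have hhigh : (fun x => (h x - c) * κ x B) =ᵐ[ν] fun x => h x - c := by
    refine ae_eq_of_ae_le_of_lintegral_le (.of_forall fun x => mul_le_of_le_one_right' prob_le_one)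
      (ne_top_of_le_ne_top hA hle) (hh.sub measurable_const).aemeasurable ?_
    rw [← key, hlow, add_zero]
  constructor
  · filter_upwards [hhigh, ae_lt_top hh hfin] with x hx hfinx hcx
    exact (ENNReal.mul_eq_left (tsub_pos_iff_lt.2 hcx).ne'
      (ne_top_of_le_ne_top hfinx.ne tsub_le_self)).1 hx
  · filter_upwards [(lintegral_eq_zero_iff ((measurable_const.sub hh).mul hg)).1 hlow]
      with x hx hcx
    exact (mul_eq_zero.1 hx).resolve_left (tsub_pos_iff_lt.2 hcx).ne'

lemma Invariant.ae_kernel_superlevelSet_eq_indicator [IsMarkovKernel κ] [IsFiniteMeasure ν]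
    (hν : κ.Invariant ν) (hνh : κ.Invariant (ν.withDensity h)) (hh : Measurable h)
    (hfin : ∫⁻ x, h x ∂ν ≠ ∞) {c : ℝ≥0∞} (hc : c ≠ ∞) :
    ∀ᵐ x ∂ν, κ x {y | c < h y} = {y | c < h y}.indicator 1 x := by
  have hlevel (d : ℝ≥0∞) (hd : d ≠ ∞) := hν.ae_kernel_superlevelSet hνh hh hfin hd
  have hlevel_ne_top (n : ℕ) : c + ((n : ℝ≥0∞) + 1)⁻¹ ≠ ∞ := by simp [hc]
  filter_upwards [(hlevel c hc).1, ae_all_iff.2 fun n => (hlevel _ (hlevel_ne_top n)).2]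
    with x hone hzero
  by_cases hcx : c < h x
  · simp [hcx, hone hcx]
  · have hunion : {y | c < h y} = ⋃ n : ℕ, {y | c + ((n : ℝ≥0∞) + 1)⁻¹ < h y} := by
      ext y
      simp only [mem_ofPred_eq, mem_iUnion]
      exact ⟨ENNReal.exists_add_inv_lt, fun ⟨n, hn⟩ => lt_of_le_of_lt le_self_add hn⟩
    rw [indicator_of_notMem (s := {y | c < h y}) hcx, hunion]
    exact measure_iUnion_null fun n =>
      hzero n ((not_lt.1 hcx).trans_lt (ENNReal.lt_add_right hc (by simp)))

end Superlevel

end ProbabilityTheory.Kernel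

namespace MeasureTheory.Measure

variable {α : Type*} {mα : MeasurableSpace α} {μ₁ μ₂ : Measure α}

lemma withDensity_rnDeriv_add_left (μ₁ μ₂ : Measure α) [SigmaFinite μ₁] [SigmaFinite μ₂] :
    (μ₁ + μ₂).withDensity (μ₁.rnDeriv (μ₁ + μ₂)) = μ₁ :=
  withDensity_rnDeriv_eq _ _ (absolutelyContinuous_of_le (Measure.le_add_right le_rfl))

variable [IsProbabilityMeasure μ₁] [IsProbabilityMeasure μ₂]

lemma lintegral_rnDeriv_add_eq_lintegral_inv_two :
    ∫⁻ x, μ₁.rnDeriv (μ₁ + μ₂) x ∂(μ₁ + μ₂) = ∫⁻ _, 2⁻¹ ∂(μ₁ + μ₂) := by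
  rw [lintegral_rnDeriv (absolutelyContinuous_of_le (Measure.le_add_right le_rfl)), lintegral_const,
    add_apply, measure_univ, measure_univ, one_add_one_eq_two,
    ENNReal.inv_mul_cancel two_ne_zero ENNReal.ofNat_ne_top]

lemma eq_of_ae_rnDeriv_add_le_inv_two (hle : ∀ᵐ x ∂(μ₁ + μ₂), μ₁.rnDeriv (μ₁ + μ₂) x ≤ 2⁻¹) :
    μ₁ = μ₂ := by
  have hhalf : μ₁.rnDeriv (μ₁ + μ₂) =ᵐ[μ₁ + μ₂] fun _ => 2⁻¹ :=
    ae_eq_of_ae_le_of_lintegral_le hle (lintegral_rnDeriv_lt_top _ _).ne aemeasurable_const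
      lintegral_rnDeriv_add_eq_lintegral_inv_two.ge
  have hμ₁ : μ₁ = (2 : ℝ≥0∞)⁻¹ • (μ₁ + μ₂) := by
    rw [← withDensity_const, ← withDensity_congr_ae hhalf, withDensity_rnDeriv_add_left]
  ext s -
  have hs : 2 * μ₁ s = μ₁ s + μ₂ s := by
    conv_lhs => rw [hμ₁]
    simp only [smul_apply, add_apply, smul_eq_mul]
    rw [← mul_assoc, ENNReal.mul_inv_cancel two_ne_zero ENNReal.ofNat_ne_top, one_mul]
  rw [two_mul] at hs
  exact (ENNReal.add_right_inj (measure_ne_top μ₁ s)).1 hs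

lemma not_ae_inv_two_lt_rnDeriv_add : ¬ ∀ᵐ x ∂(μ₁ + μ₂), 2⁻¹ < μ₁.rnDeriv (μ₁ + μ₂) x := by
  intro hlt
  have hne : μ₁ + μ₂ ≠ 0 := by simp [← measure_univ_eq_zero]
  refine (lintegral_strict_mono hne (measurable_rnDeriv _ _).aemeasurable ?_ hlt).ne
    lintegral_rnDeriv_add_eq_lintegral_inv_two.symm
  rw [← lintegral_rnDeriv_add_eq_lintegral_inv_two]
  exact (lintegral_rnDeriv_lt_top _ _).ne

end MeasureTheory.Measure

/-- A strong Feller and irreducible Markov kernel on `ℝⁿ` possesses at most one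
invariant probability measure. -/
theorem stmt_5 (n : ℕ)
    (P : EuclideanSpace ℝ (Fin n) → Measure (EuclideanSpace ℝ (Fin n)))
    (hprob : ∀ x, IsProbabilityMeasure (P x))
    (hmeas : ∀ A : Set (EuclideanSpace ℝ (Fin n)), MeasurableSet A →
      Measurable (fun x => P x A))
    (hSF : ∀ f : EuclideanSpace ℝ (Fin n) → ℝ, Measurable f →
      (∃ M, ∀ x, |f x| ≤ M) → Continuous (fun x => ∫ y, f y ∂(P x)))
    (hIrr : ∀ x (z : EuclideanSpace ℝ (Fin n)) (r : ℝ), 0 < r →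
      0 < P x (Metric.ball z r))
    (μ₁ μ₂ : Measure (EuclideanSpace ℝ (Fin n)))
    (hμ₁ : IsProbabilityMeasure μ₁) (hμ₂ : IsProbabilityMeasure μ₂)
    (hinv₁ : μ₁.bind P = μ₁) (hinv₂ : μ₂.bind P = μ₂) :
    μ₁ = μ₂ := by
  let κ : Kernel (EuclideanSpace ℝ (Fin n)) (EuclideanSpace ℝ (Fin n)) :=
    ⟨P, Measure.measurable_of_measurable_coe P hmeas⟩
  have : IsMarkovKernel κ := ⟨hprob⟩
  set ν := μ₁ + μ₂
  have hν : κ.Invariant ν := Kernel.Invariant.add hinv₁ hinv₂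
  have : ν.IsOpenPosMeasure := by
    refine hν.isOpenPosMeasure (by simp [ν, ← Measure.measure_univ_eq_zero]) ?_
    rintro x U hU ⟨z, hz⟩
    obtain ⟨r, hr, hball⟩ := Metric.isOpen_iff.1 hU z hz
    exact (hIrr x z r hr).trans_le (measure_mono hball)
  set h := μ₁.rnDeriv ν
  have hνh : κ.Invariant (ν.withDensity h) := by
    rwa [Kernel.Invariant, Measure.withDensity_rnDeriv_add_left]
  have hS := hν.ae_kernel_superlevelSet_eq_indicator hνh (Measure.measurable_rnDeriv _ _)
    (Measure.lintegral_rnDeriv_lt_top _ _).ne (c := 2⁻¹) (by simp)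
  set S := {y | 2⁻¹ < h y}
  have hSm : MeasurableSet S := measurableSet_lt measurable_const (Measure.measurable_rnDeriv _ _)
  have hcont : Continuous fun x => P x S :=
    continuous_measure_apply_of_continuous_integral_indicator hSm <|
      hSF _ (measurable_one.indicator hSm) ⟨1, fun x => by by_cases hx : x ∈ S <;> simp [hx]⟩
  rcases ae_notMem_or_ae_mem_of_continuous_ae_eq_indicator hcont hS with hle | hlt
  · exact Measure.eq_of_ae_rnDeriv_add_le_inv_two (hle.mono fun _ hx => not_lt.1 hx)
  · exact absurd hlt Measure.not_ae_inv_two_lt_rnDeriv_add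
end

section
/- Let n ≥ 1, α > 0, Λ ≥ 1, β ∈ (0,1) and c₀ > 0. Let σ : ℝⁿ → (n × n real matrices) be such that every σ(x) is invertible with Λ^{−1}|ξ| ≤ |σ(x) ξ| ≤ Λ|ξ| for all ξ ∈ ℝⁿ, and ‖σ(x) − σ(z)‖ ≤ c₀ |x − z|^β for all x, z, where ‖·‖ is the Hilbert–Schmidt norm. Define k(x,y) = |det σ(x)|^{−1}·(|y| / |σ(x)^{−1} y|)^{n+α} for y ≠ 0. Then there exists a constant r₂ > 0, depending only on n, α, Λ and c₀, such that |k(x,y) − k(z,y)| ≤ r₂ |x − z|^β for all x, z ∈ ℝⁿ and all y ≠ 0. -/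
/-!
Write `k(A, y) = |det A|⁻¹ t_A(y)^p` with `t_A(y) = |y| / |A⁻¹ y| ∈ (0, Λ]`. Over uniformly
elliptic matrices both factors are Lipschitz in `A` for the Hilbert–Schmidt distance: the
determinant is a polynomial in entries bounded by `Λ`, `|det A|⁻¹ = |det A⁻¹|` is bounded because
`A⁻¹` is, the identity `A⁻¹ - B⁻¹ = A⁻¹ (B - A) B⁻¹` controls `t_A - t_B`, and `t ↦ t^p` is
Lipschitz on `[0, Λ]` for `p ≥ 1`. Composing with the `β`-Hölder map `x ↦ σ(x)` gives the claim.
-/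

open Matrix Finset Nat

lemma abs_rpow_sub_rpow_le {p Λ a b : ℝ} (hp : 1 ≤ p) (ha : 0 ≤ a) (hb : 0 ≤ b)
    (haΛ : a ≤ Λ) (hbΛ : b ≤ Λ) :
    |a ^ p - b ^ p| ≤ p * Λ ^ (p - 1) * |a - b| := by
  have hderiv : ∀ t ∈ Set.Icc 0 Λ, ‖deriv (fun t : ℝ => t ^ p) t‖ ≤ p * Λ ^ (p - 1) := by
    rintro t ⟨ht0, htΛ⟩
    rw [Real.deriv_rpow_const, Real.norm_eq_abs, abs_of_nonneg (by positivity)]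
    gcongr
  exact (convex_Icc 0 Λ).norm_image_sub_le_of_norm_deriv_le
    (fun t _ => differentiableAt_id.rpow_const (Or.inr hp)) hderiv ⟨hb, hbΛ⟩ ⟨ha, haΛ⟩

lemma Finset.abs_prod_sub_prod_le {κ : Type*} (s : Finset κ) {a b : κ → ℝ} {Λ ε : ℝ}
    (hΛ : 0 ≤ Λ) (ha : ∀ i ∈ s, |a i| ≤ Λ) (hb : ∀ i ∈ s, |b i| ≤ Λ)
    (hab : ∀ i ∈ s, |a i - b i| ≤ ε) :
    |∏ i ∈ s, a i - ∏ i ∈ s, b i| ≤ #s * Λ ^ (#s - 1) * ε := by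
  induction s using Finset.cons_induction with
  | empty => simp
  | cons i t _ ih =>
    simp only [forall_mem_cons] at ha hb hab
    have hε : 0 ≤ ε := (abs_nonneg _).trans hab.1
    have hprod : |∏ j ∈ t, a j| ≤ Λ ^ #t := by
      rw [abs_prod]
      exact (prod_le_prod (fun _ _ => abs_nonneg _) ha.2).trans_eq (prod_const Λ)
    have hΛt : Λ * (#t * Λ ^ (#t - 1)) = #t * Λ ^ #t := by
      rcases eq_or_ne #t 0 with ht | ht
      · simp [ht]
      · rw [mul_left_comm, mul_pow_sub_one ht]
    rw [prod_cons, prod_cons, card_cons, Nat.add_sub_cancel]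
    calc |a i * ∏ j ∈ t, a j - b i * ∏ j ∈ t, b j|
        = |(a i - b i) * ∏ j ∈ t, a j + b i * (∏ j ∈ t, a j - ∏ j ∈ t, b j)| := by
          congr 1
          ring
      _ ≤ ε * Λ ^ #t + Λ * (#t * Λ ^ (#t - 1) * ε) := by
        refine (abs_add_le _ _).trans (add_le_add ?_ ?_) <;> rw [abs_mul]
        · exact mul_le_mul hab.1 hprod (abs_nonneg _) hε
        · exact mul_le_mul hb.1 (ih ha.2 hb.2 hab.2) (abs_nonneg _) hΛ
      _ = (#t + 1 : ℕ) * Λ ^ #t * ε := by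
        rw [← mul_assoc, hΛt]
        push_cast
        ring

namespace Matrix

variable {m n ι : Type*} [Fintype m] [Fintype n] [DecidableEq n] [Fintype ι] [DecidableEq ι]

lemma abs_apply_le_of_norm_toEuclideanLin_le {A : Matrix m n ℝ} {Λ : ℝ}
    (h : ∀ v, ‖toEuclideanLin A v‖ ≤ Λ * ‖v‖) (i : m) (j : n) : |A i j| ≤ Λ :=
  calc |A i j| = ‖toEuclideanLin A (EuclideanSpace.single j 1) i‖ := by
        simp [toLpLin_apply]
    _ ≤ ‖toEuclideanLin A (EuclideanSpace.single j 1)‖ := PiLp.norm_apply_le _ _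
    _ ≤ Λ := by simpa using h (EuclideanSpace.single j 1)

lemma norm_toEuclideanLin_le (A : Matrix m n ℝ) (v : EuclideanSpace ℝ n) :
    ‖toEuclideanLin A v‖ ≤ √(∑ i, ∑ j, A i j ^ 2) * ‖v‖ := by
  rw [EuclideanSpace.norm_eq, EuclideanSpace.norm_eq, ← Real.sqrt_mul (by positivity)]
  refine Real.sqrt_le_sqrt ?_
  simp only [Real.norm_eq_abs, sq_abs]
  rw [sum_mul]
  exact sum_le_sum fun i _ => sum_mul_sq_le_sq_mul_sq univ (A i) v

lemma abs_apply_le_sqrt_sum_sq (A : Matrix m n ℝ) (i : m) (j : n) :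
    |A i j| ≤ √(∑ i, ∑ j, A i j ^ 2) :=
  abs_apply_le_of_norm_toEuclideanLin_le (norm_toEuclideanLin_le A) i j

lemma abs_det_sub_det_le {A B : Matrix ι ι ℝ} {Λ ε : ℝ} (hΛ : 0 ≤ Λ)
    (hA : ∀ i j, |A i j| ≤ Λ) (hB : ∀ i j, |B i j| ≤ Λ) (hAB : ∀ i j, |A i j - B i j| ≤ ε) :
    |A.det - B.det| ≤
      (Fintype.card ι)! * (Fintype.card ι * Λ ^ (Fintype.card ι - 1) * ε) := by
  rw [det_apply, det_apply, ← sum_sub_distrib]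
  calc |∑ σ : Equiv.Perm ι, (Equiv.Perm.sign σ • ∏ i, A (σ i) i -
          Equiv.Perm.sign σ • ∏ i, B (σ i) i)|
      ≤ ∑ σ : Equiv.Perm ι, |∏ i, A (σ i) i - ∏ i, B (σ i) i| := by
        refine (abs_sum_le_sum_abs _ _).trans_eq (sum_congr rfl fun σ _ => ?_)
        rw [← smul_sub]
        exact AbsoluteValue.abs.map_units_int_smul _ _
    _ ≤ ∑ _σ : Equiv.Perm ι, (Fintype.card ι * Λ ^ (Fintype.card ι - 1) * ε) := by
        gcongr with σ
        simpa using abs_prod_sub_prod_le univ hΛ (fun i _ => hA _ _) (fun i _ => hB _ _)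
          (fun i _ => hAB _ _)
    _ = _ := by simp [Fintype.card_perm]

lemma toEuclideanLin_apply_toEuclideanLin_inv {A : Matrix ι ι ℝ} (hA : IsUnit A.det)
    (v : EuclideanSpace ℝ ι) : toEuclideanLin A (toEuclideanLin A⁻¹ v) = v := by
  rw [← LinearMap.comp_apply, ← toLpLin_mul_same, mul_nonsing_inv _ hA, toLpLin_one,
    LinearMap.id_apply]

end Matrix

section Elliptic

variable {ι : Type*} [Fintype ι] [DecidableEq ι]

def IsUniformlyElliptic (Λ : ℝ) (A : Matrix ι ι ℝ) : Prop :=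
  ∀ ξ : EuclideanSpace ℝ ι, Λ⁻¹ * ‖ξ‖ ≤ ‖toEuclideanLin A ξ‖ ∧ ‖toEuclideanLin A ξ‖ ≤ Λ * ‖ξ‖

/-- `k(x, y)` of the paper is `jumpKernel (n + α) (σ x) y`. -/
noncomputable def jumpKernel (p : ℝ) (A : Matrix ι ι ℝ) (y : EuclideanSpace ℝ ι) : ℝ :=
  |A.det|⁻¹ * (‖y‖ / ‖toEuclideanLin A⁻¹ y‖) ^ p

namespace IsUniformlyElliptic

variable {Λ : ℝ} {A B : Matrix ι ι ℝ}

lemma norm_inv_apply_le (hΛ : 0 < Λ) (hA : IsUnit A.det) (h : IsUniformlyElliptic Λ A)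
    (v : EuclideanSpace ℝ ι) : ‖toEuclideanLin A⁻¹ v‖ ≤ Λ * ‖v‖ := by
  have := (h (toEuclideanLin A⁻¹ v)).1
  rwa [toEuclideanLin_apply_toEuclideanLin_inv hA, inv_mul_le_iff₀ hΛ] at this

lemma norm_le_mul_norm_inv_apply (hA : IsUnit A.det) (h : IsUniformlyElliptic Λ A)
    (v : EuclideanSpace ℝ ι) : ‖v‖ ≤ Λ * ‖toEuclideanLin A⁻¹ v‖ := by
  simpa [toEuclideanLin_apply_toEuclideanLin_inv hA] using (h (toEuclideanLin A⁻¹ v)).2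

lemma inv_abs_det_le (hΛ : 0 < Λ) (hA : IsUnit A.det) (h : IsUniformlyElliptic Λ A) :
    |A.det|⁻¹ ≤ (Fintype.card ι)! * Λ ^ Fintype.card ι := by
  have := det_le (abv := AbsoluteValue.abs)
    (abs_apply_le_of_norm_toEuclideanLin_le (h.norm_inv_apply_le hΛ hA))
  rwa [det_nonsing_inv, Ring.inverse_eq_inv', AbsoluteValue.abs_apply, abs_inv,
    nsmul_eq_mul] at this

lemma abs_inv_abs_det_sub_le (hΛ : 0 < Λ) (hA : IsUnit A.det) (hB : IsUnit B.det)
    (hAΛ : IsUniformlyElliptic Λ A) (hBΛ : IsUniformlyElliptic Λ B) :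
    |(|A.det|⁻¹ - |B.det|⁻¹)| ≤ ((Fintype.card ι)! * Λ ^ Fintype.card ι) ^ 2 *
      ((Fintype.card ι)! * (Fintype.card ι * Λ ^ (Fintype.card ι - 1) *
        √(∑ i, ∑ j, (A i j - B i j) ^ 2))) := by
  have hdet := abs_det_sub_det_le hΛ.le
    (abs_apply_le_of_norm_toEuclideanLin_le fun v => (hAΛ v).2)
    (abs_apply_le_of_norm_toEuclideanLin_le fun v => (hBΛ v).2)
    (fun i j => by simpa using abs_apply_le_sqrt_sum_sq (A - B) i j)
  have hA0 : 0 < |A.det| := abs_pos.2 hA.ne_zero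
  have hB0 : 0 < |B.det| := abs_pos.2 hB.ne_zero
  calc |(|A.det|⁻¹ - |B.det|⁻¹)| = |A.det|⁻¹ * |B.det|⁻¹ * |(|B.det| - |A.det|)| := by
        rw [inv_sub_inv hA0.ne' hB0.ne', abs_div, abs_of_pos (mul_pos hA0 hB0), div_eq_inv_mul,
          mul_inv]
    _ ≤ ((Fintype.card ι)! * Λ ^ Fintype.card ι) * ((Fintype.card ι)! * Λ ^ Fintype.card ι) *
          |A.det - B.det| := by
        gcongr ?_ * ?_ * ?_
        · exact hAΛ.inv_abs_det_le hΛ hA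
        · exact hBΛ.inv_abs_det_le hΛ hB
        · exact (abs_abs_sub_abs_le_abs_sub _ _).trans_eq (abs_sub_comm _ _)
    _ ≤ _ := by rw [← sq]; exact mul_le_mul_of_nonneg_left hdet (by positivity)

lemma norm_inv_apply_sub_inv_apply_le (hΛ : 0 < Λ) (hA : IsUnit A.det) (hB : IsUnit B.det)
    (hAΛ : IsUniformlyElliptic Λ A) (hBΛ : IsUniformlyElliptic Λ B) (v : EuclideanSpace ℝ ι) :
    ‖toEuclideanLin A⁻¹ v - toEuclideanLin B⁻¹ v‖ ≤
      Λ ^ 2 * √(∑ i, ∑ j, (A i j - B i j) ^ 2) * ‖v‖ := by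
  have hinv : A⁻¹ - B⁻¹ = -(A⁻¹ * (A - B) * B⁻¹) := by
    rw [Matrix.mul_sub, Matrix.sub_mul, nonsing_inv_mul _ hA, Matrix.one_mul,
      Matrix.mul_assoc, mul_nonsing_inv _ hB, Matrix.mul_one, neg_sub]
  calc ‖toEuclideanLin A⁻¹ v - toEuclideanLin B⁻¹ v‖
      = ‖toEuclideanLin A⁻¹ (toEuclideanLin (A - B) (toEuclideanLin B⁻¹ v))‖ := by
        rw [← LinearMap.sub_apply, ← map_sub, hinv, map_neg, LinearMap.neg_apply, norm_neg,
          toLpLin_mul_same, toLpLin_mul_same]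
        rfl
    _ ≤ Λ * (√(∑ i, ∑ j, (A i j - B i j) ^ 2) * (Λ * ‖v‖)) := by
        refine (hAΛ.norm_inv_apply_le hΛ hA _).trans ?_
        gcongr
        refine (norm_toEuclideanLin_le _ _).trans ?_
        simp only [Matrix.sub_apply]
        gcongr
        exact hBΛ.norm_inv_apply_le hΛ hB v
    _ = _ := by ring

lemma div_norm_inv_apply_le (hΛ : 0 < Λ) (hA : IsUnit A.det) (h : IsUniformlyElliptic Λ A)
    (y : EuclideanSpace ℝ ι) : ‖y‖ / ‖toEuclideanLin A⁻¹ y‖ ≤ Λ :=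
  div_le_of_le_mul₀ (norm_nonneg _) hΛ.le (h.norm_le_mul_norm_inv_apply hA y)

lemma abs_div_norm_inv_apply_sub_le (hΛ : 0 < Λ) (hA : IsUnit A.det) (hB : IsUnit B.det)
    (hAΛ : IsUniformlyElliptic Λ A) (hBΛ : IsUniformlyElliptic Λ B)
    {y : EuclideanSpace ℝ ι} (hy : y ≠ 0) :
    |‖y‖ / ‖toEuclideanLin A⁻¹ y‖ - ‖y‖ / ‖toEuclideanLin B⁻¹ y‖| ≤
      Λ ^ 4 * √(∑ i, ∑ j, (A i j - B i j) ^ 2) := by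
  set a := ‖toEuclideanLin A⁻¹ y‖
  set b := ‖toEuclideanLin B⁻¹ y‖
  set ε := √(∑ i, ∑ j, (A i j - B i j) ^ 2)
  have hya : ‖y‖ ≤ Λ * a := hAΛ.norm_le_mul_norm_inv_apply hA y
  have hyb : ‖y‖ ≤ Λ * b := hBΛ.norm_le_mul_norm_inv_apply hB y
  have hy0 : 0 < ‖y‖ := norm_pos_iff.2 hy
  have ha : 0 < a := pos_of_mul_pos_right (hy0.trans_le hya) hΛ.le
  have hb : 0 < b := pos_of_mul_pos_right (hy0.trans_le hyb) hΛ.le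
  have hab : |b - a| ≤ Λ ^ 2 * ε * ‖y‖ := by
    rw [abs_sub_comm]
    exact (abs_norm_sub_norm_le _ _).trans
      (hAΛ.norm_inv_apply_sub_inv_apply_le hΛ hA hB hBΛ y)
  calc |‖y‖ / a - ‖y‖ / b| = ‖y‖ * |b - a| / (a * b) := by
        rw [div_sub_div _ _ ha.ne' hb.ne', abs_div, abs_of_pos (mul_pos ha hb), mul_comm a,
          ← mul_sub, abs_mul, abs_norm]
    _ ≤ ‖y‖ * (Λ ^ 2 * ε * ‖y‖) / (a * b) := by gcongr
    _ = Λ ^ 2 * ε * (‖y‖ * ‖y‖) / (a * b) := by ring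
    _ ≤ Λ ^ 2 * ε * ((Λ * a) * (Λ * b)) / (a * b) := by gcongr
    _ = Λ ^ 4 * ε := by field_simp

end IsUniformlyElliptic

theorem exists_abs_jumpKernel_sub_le {p Λ : ℝ} (hp : 1 ≤ p) (hΛ : 0 < Λ) :
    ∃ C, 0 < C ∧ ∀ A B : Matrix ι ι ℝ, IsUnit A.det → IsUnit B.det →
      IsUniformlyElliptic Λ A → IsUniformlyElliptic Λ B → ∀ y, y ≠ 0 →
        |jumpKernel p A y - jumpKernel p B y| ≤ C * √(∑ i, ∑ j, (A i j - B i j) ^ 2) := by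
  set K : ℝ := (Fintype.card ι)! * Λ ^ Fintype.card ι
  set D : ℝ := (Fintype.card ι)! * (Fintype.card ι * Λ ^ (Fintype.card ι - 1))
  have hp0 : 0 < p := zero_lt_one.trans_le hp
  refine ⟨K * (p * Λ ^ (p - 1) * Λ ^ 4) + Λ ^ p * (K ^ 2 * D), by positivity, ?_⟩
  intro A B hA hB hAΛ hBΛ y hy
  set ε := √(∑ i, ∑ j, (A i j - B i j) ^ 2)
  set tA := ‖y‖ / ‖toEuclideanLin A⁻¹ y‖
  set tB := ‖y‖ / ‖toEuclideanLin B⁻¹ y‖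
  have htA : tA ≤ Λ := hAΛ.div_norm_inv_apply_le hΛ hA y
  have htB : tB ≤ Λ := hBΛ.div_norm_inv_apply_le hΛ hB y
  calc |jumpKernel p A y - jumpKernel p B y|
      = |(|A.det|⁻¹ * (tA ^ p - tB ^ p) + tB ^ p * (|A.det|⁻¹ - |B.det|⁻¹))| := by
        show |(|A.det|⁻¹ * tA ^ p - |B.det|⁻¹ * tB ^ p)| = _
        congr 1
        ring
    _ ≤ |A.det|⁻¹ * |tA ^ p - tB ^ p| + tB ^ p * |(|A.det|⁻¹ - |B.det|⁻¹)| := by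
        refine (abs_add_le _ _).trans_eq ?_
        rw [abs_mul, abs_mul, abs_of_nonneg (inv_nonneg.2 (abs_nonneg _)),
          abs_of_nonneg (Real.rpow_nonneg (by positivity) p)]
    _ ≤ K * (p * Λ ^ (p - 1) * (Λ ^ 4 * ε)) + Λ ^ p * (K ^ 2 * (D * ε)) := by
        gcongr
        · exact hAΛ.inv_abs_det_le hΛ hA
        · refine (abs_rpow_sub_rpow_le hp (by positivity) (by positivity) htA htB).trans ?_
          gcongr
          exact hAΛ.abs_div_norm_inv_apply_sub_le hΛ hA hB hBΛ hy
        · exact (hAΛ.abs_inv_abs_det_sub_le hΛ hA hB hBΛ).trans_eq (by ring)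
    _ = _ := by ring

end Elliptic

theorem stmt_10_general (n : ℕ) (hn : 1 ≤ n) (α Λ β c₀ : ℝ) (hα : 0 < α) (hΛ : 1 ≤ Λ)
    (hc₀ : 0 < c₀) :
    ∃ r₂ : ℝ, 0 < r₂ ∧
      ∀ σ : EuclideanSpace ℝ (Fin n) → Matrix (Fin n) (Fin n) ℝ,
        (∀ x, IsUnit (σ x).det) →
        (∀ x (ξ : EuclideanSpace ℝ (Fin n)),
          Λ⁻¹ * ‖ξ‖ ≤ ‖Matrix.toEuclideanLin (σ x) ξ‖ ∧
            ‖Matrix.toEuclideanLin (σ x) ξ‖ ≤ Λ * ‖ξ‖) →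
        (∀ x z, Real.sqrt (∑ i, ∑ j, (σ x i j - σ z i j) ^ 2) ≤ c₀ * ‖x - z‖ ^ β) →
        ∀ x z (y : EuclideanSpace ℝ (Fin n)), y ≠ 0 →
          abs (|(σ x).det|⁻¹ * (‖y‖ / ‖Matrix.toEuclideanLin (σ x)⁻¹ y‖) ^ ((n : ℝ) + α) -
              |(σ z).det|⁻¹ *
                (‖y‖ / ‖Matrix.toEuclideanLin (σ z)⁻¹ y‖) ^ ((n : ℝ) + α)) ≤
            r₂ * ‖x - z‖ ^ β := by
  have hp : 1 ≤ (n : ℝ) + α := by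
    have : (1 : ℝ) ≤ n := by exact_mod_cast hn
    linarith
  obtain ⟨C, hC, hk⟩ := exists_abs_jumpKernel_sub_le (ι := Fin n) hp (zero_lt_one.trans_le hΛ)
  refine ⟨C * c₀, mul_pos hC hc₀, fun σ hdet hell hhol x z y hy => ?_⟩
  calc _ ≤ C * √(∑ i, ∑ j, (σ x i j - σ z i j) ^ 2) :=
        hk (σ x) (σ z) (hdet x) (hdet z) (hell x) (hell z) y hy
    _ ≤ C * (c₀ * ‖x - z‖ ^ β) := by gcongr; exact hhol x z
    _ = C * c₀ * ‖x - z‖ ^ β := by ring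

/-- Hölder continuity of the jump kernel `k(x,y) = |det σ(x)|⁻¹ (|y|/|σ(x)⁻¹y|)^{n+α}`
in its first argument: under uniform ellipticity and Hölder continuity (in the
Hilbert–Schmidt norm) of `σ`, there is `r₂ > 0`, depending only on `n, α, Λ, c₀`,
with `|k(x,y) − k(z,y)| ≤ r₂|x−z|^β` for all `x, z` and `y ≠ 0`. -/
theorem stmt_10 (n : ℕ) (hn : 1 ≤ n) (α Λ β c₀ : ℝ) (hα : 0 < α) (hΛ : 1 ≤ Λ)
    (hβ : β ∈ Set.Ioo (0 : ℝ) 1) (hc₀ : 0 < c₀) :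
    ∃ r₂ : ℝ, 0 < r₂ ∧
      ∀ σ : EuclideanSpace ℝ (Fin n) → Matrix (Fin n) (Fin n) ℝ,
        (∀ x, IsUnit (σ x).det) →
        (∀ x (ξ : EuclideanSpace ℝ (Fin n)),
          Λ⁻¹ * ‖ξ‖ ≤ ‖Matrix.toEuclideanLin (σ x) ξ‖ ∧
            ‖Matrix.toEuclideanLin (σ x) ξ‖ ≤ Λ * ‖ξ‖) →
        (∀ x z, Real.sqrt (∑ i, ∑ j, (σ x i j - σ z i j) ^ 2) ≤ c₀ * ‖x - z‖ ^ β) →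
        ∀ x z (y : EuclideanSpace ℝ (Fin n)), y ≠ 0 →
          abs (|(σ x).det|⁻¹ * (‖y‖ / ‖Matrix.toEuclideanLin (σ x)⁻¹ y‖) ^ ((n : ℝ) + α) -
              |(σ z).det|⁻¹ *
                (‖y‖ / ‖Matrix.toEuclideanLin (σ z)⁻¹ y‖) ^ ((n : ℝ) + α)) ≤
            r₂ * ‖x - z‖ ^ β :=
  stmt_10_general n hn α Λ β c₀ hα hΛ hc₀
end

section
/- Let n ≥ 1, α ∈ (1,2), Λ > 0, let M be a real n × n matrix with |M ξ| ≤ Λ|ξ| for all ξ ∈ ℝⁿ, and let x ∈ ℝⁿ. Define r(x) = √(1+|x|²) and g(y) = r(x + M y) − r(x) − 𝟙_{|y|<1}·⟨M y, x⟩/√(1+|x|²). Then g is integrable on ℝⁿ \ {0} with respect to the measure |y|^{−n−α} dy, and ∫_{ℝⁿ\{0}} g(y)·|y|^{−n−α} dy ≤ (Λ²/2)∫_{0<|y|<1} |y|^{2−n−α} dy + Λ ∫_{|y|≥1} |y|^{1−n−α} dy. -/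
open MeasureTheory
open scoped RealInnerProductSpace

/-!
Write `r(v) = √(1 + ‖v‖²)`. Cauchy–Schwarz for the vectors `(1, x)` and `(1, y)` of `ℝ × ℝⁿ`
gives `1 + ⟪x, y⟫ ≤ r(x) r(y)`, from which `r` is 1-Lipschitz and
`0 ≤ r(x + z) - r(x) - ⟪z, x⟫ / r(x) ≤ ‖z‖² / 2`. With `z = M y` and `‖M y‖ ≤ Λ ‖y‖`, the
integrand is therefore dominated by `Λ² / 2 · ‖y‖ ^ (2 - n - α)` on the punctured unit ball and by
`Λ · ‖y‖ ^ (1 - n - α)` outside it, and both majorants are integrable because `1 < α < 2`.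
-/

open Set Metric

section JapaneseBracket

variable {F : Type*} [NormedAddCommGroup F] [InnerProductSpace ℝ F]

lemma one_add_inner_le_sqrt_mul_sqrt (x y : F) :
    1 + ⟪x, y⟫ ≤ √(1 + ‖x‖ ^ 2) * √(1 + ‖y‖ ^ 2) := by
  rw [← Real.sqrt_mul (by positivity)]
  refine (le_abs_self _).trans (Real.abs_le_sqrt ?_)
  obtain ⟨hxy₁, hxy₂⟩ := abs_le.mp (abs_real_inner_le_norm x y)
  have hsq : ⟪x, y⟫ ^ 2 ≤ (‖x‖ * ‖y‖) ^ 2 := sq_le_sq' hxy₁ hxy₂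
  nlinarith [sq_nonneg (‖x‖ - ‖y‖), le_abs_self ⟪x, y⟫]

lemma abs_sqrt_one_add_norm_sq_sub_le (x y : F) :
    |√(1 + ‖x‖ ^ 2) - √(1 + ‖y‖ ^ 2)| ≤ ‖x - y‖ := by
  refine abs_le_of_sq_le_sq ?_ (norm_nonneg _)
  have hx : √(1 + ‖x‖ ^ 2) ^ 2 = 1 + ‖x‖ ^ 2 := Real.sq_sqrt (by positivity)
  have hy : √(1 + ‖y‖ ^ 2) ^ 2 = 1 + ‖y‖ ^ 2 := Real.sq_sqrt (by positivity)
  nlinarith [one_add_inner_le_sqrt_mul_sqrt x y, norm_sub_sq_real x y]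

lemma abs_sqrt_one_add_norm_sq_add_sub_sub_inner_le (x z : F) :
    |√(1 + ‖x + z‖ ^ 2) - √(1 + ‖x‖ ^ 2) - ⟪z, x⟫ / √(1 + ‖x‖ ^ 2)| ≤ ‖z‖ ^ 2 / 2 := by
  set a := √(1 + ‖x‖ ^ 2)
  set b := √(1 + ‖x + z‖ ^ 2)
  have ha : 1 ≤ a := Real.one_le_sqrt.mpr (by nlinarith [sq_nonneg ‖x‖])
  have ha2 : a ^ 2 = 1 + ‖x‖ ^ 2 := Real.sq_sqrt (by positivity)
  have hb2 : b ^ 2 = 1 + ‖x + z‖ ^ 2 := Real.sq_sqrt (by positivity)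
  have hexpand : ‖x + z‖ ^ 2 = ‖x‖ ^ 2 + 2 * ⟪z, x⟫ + ‖z‖ ^ 2 := by
    rw [norm_add_sq_real, real_inner_comm]
  have hlower : a ^ 2 + ⟪z, x⟫ ≤ a * b := by
    have h := one_add_inner_le_sqrt_mul_sqrt x (x + z)
    rw [inner_add_right, real_inner_self_eq_norm_sq, real_inner_comm] at h
    linarith
  -- `2ab ≤ a² + b²`, and `b² = a² + 2⟪z, x⟫ + ‖z‖²`
  have hupper : a * b ≤ a ^ 2 + ⟪z, x⟫ + ‖z‖ ^ 2 / 2 := by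
    nlinarith [sq_nonneg (a - b)]
  have hquot : b - a - ⟪z, x⟫ / a = (a * b - a ^ 2 - ⟪z, x⟫) / a := by
    field_simp
  rw [hquot, abs_of_nonneg (div_nonneg (by linarith) (by linarith)),
    div_le_iff₀ (by linarith)]
  nlinarith [sq_nonneg ‖z‖]

variable {x z : F} {Λ t s : ℝ}

lemma abs_sqrt_one_add_norm_sq_add_sub_mul_rpow_le (ht : 0 < t) (hz : ‖z‖ ≤ Λ * t) :
    |(√(1 + ‖x + z‖ ^ 2) - √(1 + ‖x‖ ^ 2)) * t ^ s| ≤ Λ * t ^ (1 + s) := by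
  have hlip := abs_sqrt_one_add_norm_sq_sub_le (x + z) x
  rw [add_sub_cancel_left] at hlip
  rw [abs_mul, abs_of_nonneg (Real.rpow_nonneg ht.le s), Real.rpow_add ht, Real.rpow_one]
  calc _ ≤ (Λ * t) * t ^ s := by gcongr; exact hlip.trans hz
    _ = _ := by ring

lemma abs_sqrt_one_add_norm_sq_add_sub_sub_inner_mul_rpow_le (ht : 0 < t) (hz : ‖z‖ ≤ Λ * t) :
    |(√(1 + ‖x + z‖ ^ 2) - √(1 + ‖x‖ ^ 2) - ⟪z, x⟫ / √(1 + ‖x‖ ^ 2)) * t ^ s| ≤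
      Λ ^ 2 / 2 * t ^ (2 + s) := by
  rw [abs_mul, abs_of_nonneg (Real.rpow_nonneg ht.le s), Real.rpow_add ht, Real.rpow_two]
  calc _ ≤ (Λ * t) ^ 2 / 2 * t ^ s := by
        gcongr
        exact (abs_sqrt_one_add_norm_sq_add_sub_sub_inner_le x z).trans (by gcongr)
    _ = _ := by ring

end JapaneseBracket

section RadialIntegrability

variable {E : Type*} [NormedAddCommGroup E] [NormedSpace ℝ E] [FiniteDimensional ℝ E]
  [MeasurableSpace E] [BorelSpace E] {μ : Measure E} [μ.IsAddHaarMeasure]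

lemma integrableOn_ball_norm_rpow (hd : 1 ≤ Module.finrank ℝ E) {s r : ℝ}
    (hs : -(Module.finrank ℝ E : ℝ) < s) :
    IntegrableOn (fun y : E => ‖y‖ ^ s) (ball 0 r) μ := by
  refine integrableOn_ball_of_norm_le_rpow hd (C := 1) (α := -s) (by linarith)
    (ae_of_all _ fun y => ?_) (measurable_norm.pow_const s).aestronglyMeasurable
  rw [neg_neg, one_mul, Real.norm_of_nonneg (Real.rpow_nonneg (norm_nonneg y) s)]

lemma integrableOn_setOf_le_norm_rpow {s R : ℝ} (hR : 0 < R)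
    (hs : s < -(Module.finrank ℝ E : ℝ)) :
    IntegrableOn (fun y : E => ‖y‖ ^ s) {y | R ≤ ‖y‖} μ := by
  have hint := (integrable_one_add_norm (μ := μ) (r := -s) (by linarith)).const_mul
    ((1 + R⁻¹) ^ (-s))
  refine hint.integrableOn.mono' (measurable_norm.pow_const s).aestronglyMeasurable
    ((ae_restrict_iff' (measurableSet_le measurable_const measurable_norm)).mpr
      (ae_of_all _ fun y (hy : R ≤ ‖y‖) => ?_))
  have hy₀ : 0 < ‖y‖ := hR.trans_le hy
  have hc : 0 < 1 + R⁻¹ := by positivity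
  have hle : 1 + ‖y‖ ≤ (1 + R⁻¹) * ‖y‖ := by
    have : 1 ≤ R⁻¹ * ‖y‖ := by rwa [inv_mul_eq_div, one_le_div hR]
    linarith
  have hs₀ : s ≤ 0 := hs.le.trans (neg_nonpos.mpr (Nat.cast_nonneg _))
  have hpow : ((1 + R⁻¹) * ‖y‖) ^ s ≤ (1 + ‖y‖) ^ s :=
    Real.rpow_le_rpow_of_nonpos (by positivity) hle hs₀
  rw [Real.mul_rpow hc.le hy₀.le] at hpow
  rw [neg_neg, Real.norm_of_nonneg (Real.rpow_nonneg hy₀.le s)]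
  calc ‖y‖ ^ s = (1 + R⁻¹) ^ (-s) * ((1 + R⁻¹) ^ s * ‖y‖ ^ s) := by
        rw [← mul_assoc, ← Real.rpow_add hc, neg_add_cancel, Real.rpow_zero, one_mul]
    _ ≤ _ := by gcongr

end RadialIntegrability

lemma ball_diff_zero_union_setOf_le_norm {E : Type*} [SeminormedAddCommGroup E] {R : ℝ}
    (hR : 0 < R) : ball (0 : E) R \ {0} ∪ {y | R ≤ ‖y‖} = {0}ᶜ := by
  ext y
  by_cases hy : ‖y‖ < R
  · simp [hy, not_le.mpr hy]
  · have : y ≠ 0 := by rintro rfl; simp [hR] at hy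
    simp [hy, not_lt.mp hy, this]

lemma integrableOn_union_and_setIntegral_union_le {α : Type*} [MeasurableSpace α]
    {μ : Measure α} {f g h : α → ℝ} {s t : Set α} (hs : MeasurableSet s) (ht : MeasurableSet t)
    (hst : Disjoint s t) (hf : AEStronglyMeasurable f μ) (hg : IntegrableOn g s μ)
    (hh : IntegrableOn h t μ) (hfg : ∀ y ∈ s, |f y| ≤ g y) (hfh : ∀ y ∈ t, |f y| ≤ h y) :
    IntegrableOn f (s ∪ t) μ ∧ ∫ y in s ∪ t, f y ∂μ ≤ (∫ y in s, g y ∂μ) + ∫ y in t, h y ∂μ := by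
  have hfs : IntegrableOn f s μ :=
    hg.mono' hf.restrict ((ae_restrict_iff' hs).mpr (ae_of_all _ hfg))
  have hft : IntegrableOn f t μ :=
    hh.mono' hf.restrict ((ae_restrict_iff' ht).mpr (ae_of_all _ hfh))
  refine ⟨hfs.union hft, ?_⟩
  rw [setIntegral_union hst ht hfs hft]
  exact add_le_add (setIntegral_mono_on hfs hg hs fun y hy => (le_abs_self _).trans (hfg y hy))
    (setIntegral_mono_on hft hh ht fun y hy => (le_abs_self _).trans (hfh y hy))

theorem stmt_14_general (n : ℕ) (hn : 1 ≤ n) (α Λ : ℝ) (hα : α ∈ Set.Ioo (1 : ℝ) 2)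
    (M : EuclideanSpace ℝ (Fin n) →ₗ[ℝ] EuclideanSpace ℝ (Fin n))
    (hM : ∀ ξ, ‖M ξ‖ ≤ Λ * ‖ξ‖) (x : EuclideanSpace ℝ (Fin n)) :
    IntegrableOn
      (fun y =>
        (Real.sqrt (1 + ‖x + M y‖ ^ 2) - Real.sqrt (1 + ‖x‖ ^ 2) -
            (if ‖y‖ < 1 then ⟪M y, x⟫ / Real.sqrt (1 + ‖x‖ ^ 2) else 0)) *
          ‖y‖ ^ (-(n : ℝ) - α))
      ({0}ᶜ : Set (EuclideanSpace ℝ (Fin n))) ∧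
    (∫ y in ({0}ᶜ : Set (EuclideanSpace ℝ (Fin n))),
        (Real.sqrt (1 + ‖x + M y‖ ^ 2) - Real.sqrt (1 + ‖x‖ ^ 2) -
            (if ‖y‖ < 1 then ⟪M y, x⟫ / Real.sqrt (1 + ‖x‖ ^ 2) else 0)) *
          ‖y‖ ^ (-(n : ℝ) - α)) ≤
      Λ ^ 2 / 2 *
          (∫ y in (Metric.ball (0 : EuclideanSpace ℝ (Fin n)) 1 \ {0}),
            ‖y‖ ^ (2 - (n : ℝ) - α)) +
        Λ * ∫ y in {y : EuclideanSpace ℝ (Fin n) | 1 ≤ ‖y‖},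
            ‖y‖ ^ (1 - (n : ℝ) - α) := by
  obtain ⟨hα₁, hα₂⟩ := hα
  have hd : Module.finrank ℝ (EuclideanSpace ℝ (Fin n)) = n := finrank_euclideanSpace_fin
  have hM_cont : Continuous M := M.continuous_of_finiteDimensional
  rw [← ball_diff_zero_union_setOf_le_norm one_pos, ← integral_const_mul, ← integral_const_mul,
    show 2 - (n : ℝ) - α = 2 + (-n - α) by ring, show 1 - (n : ℝ) - α = 1 + (-n - α) by ring]
  refine integrableOn_union_and_setIntegral_union_le
    (measurableSet_ball.diff (measurableSet_singleton 0))
    (measurableSet_le measurable_const measurable_norm)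
    (disjoint_left.mpr fun y hy₁ hy₂ => (mem_ball_zero_iff.mp hy₁.1).not_ge hy₂) ?_
    (((integrableOn_ball_norm_rpow (by omega) (by rw [hd]; linarith)).mono_set
      sdiff_subset).const_mul _)
    ((integrableOn_setOf_le_norm_rpow one_pos (by rw [hd]; linarith)).const_mul _) ?_ ?_
  · exact (((by fun_prop : Measurable _).sub (Measurable.ite
      (measurableSet_lt measurable_norm measurable_const) (by fun_prop) measurable_const)).mul
      (measurable_norm.pow_const _)).aestronglyMeasurable
  · rintro y ⟨hy₁, hy₀⟩
    rw [if_pos (mem_ball_zero_iff.mp hy₁)]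
    exact abs_sqrt_one_add_norm_sq_add_sub_sub_inner_mul_rpow_le
      (norm_pos_iff.mpr hy₀) (hM y)
  · intro y (hy : 1 ≤ ‖y‖)
    rw [if_neg hy.not_gt, sub_zero]
    exact abs_sqrt_one_add_norm_sq_add_sub_mul_rpow_le (one_pos.trans_le hy) (hM y)

/-- Bound on the jump part of the generator applied to the Lyapunov function
`r(x) = √(1+|x|²)`: with `g(y) = r(x+My) − r(x) − 𝟙_{|y|<1}⟨My,x⟩/√(1+|x|²)` and
`|Mξ| ≤ Λ|ξ|`, the function `g` is integrable against `|y|^{−n−α} dy` on `ℝⁿ\{0}`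
and `∫ g dν ≤ (Λ²/2)∫_{0<|y|<1}|y|^{2−n−α} dy + Λ∫_{|y|≥1}|y|^{1−n−α} dy`. -/
theorem stmt_14 (n : ℕ) (hn : 1 ≤ n) (α Λ : ℝ) (hα : α ∈ Set.Ioo (1 : ℝ) 2)
    (hΛ : 0 < Λ)
    (M : EuclideanSpace ℝ (Fin n) →ₗ[ℝ] EuclideanSpace ℝ (Fin n))
    (hM : ∀ ξ, ‖M ξ‖ ≤ Λ * ‖ξ‖) (x : EuclideanSpace ℝ (Fin n)) :
    IntegrableOn
      (fun y =>
        (Real.sqrt (1 + ‖x + M y‖ ^ 2) - Real.sqrt (1 + ‖x‖ ^ 2) -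
            (if ‖y‖ < 1 then ⟪M y, x⟫ / Real.sqrt (1 + ‖x‖ ^ 2) else 0)) *
          ‖y‖ ^ (-(n : ℝ) - α))
      ({0}ᶜ : Set (EuclideanSpace ℝ (Fin n))) ∧
    (∫ y in ({0}ᶜ : Set (EuclideanSpace ℝ (Fin n))),
        (Real.sqrt (1 + ‖x + M y‖ ^ 2) - Real.sqrt (1 + ‖x‖ ^ 2) -
            (if ‖y‖ < 1 then ⟪M y, x⟫ / Real.sqrt (1 + ‖x‖ ^ 2) else 0)) *
          ‖y‖ ^ (-(n : ℝ) - α)) ≤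
      Λ ^ 2 / 2 *
          (∫ y in (Metric.ball (0 : EuclideanSpace ℝ (Fin n)) 1 \ {0}),
            ‖y‖ ^ (2 - (n : ℝ) - α)) +
        Λ * ∫ y in {y : EuclideanSpace ℝ (Fin n) | 1 ≤ ‖y‖},
            ‖y‖ ^ (1 - (n : ℝ) - α) :=
  stmt_14_general n hn α Λ hα M hM x
end
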